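/- The quartic polynomial equation a⁴c²M⁴ + 2a²c(−(1+b²)z + a²c)M³ + ((1−b²)²z² − 2a²c(1+b²)z + (c²−1)a⁴)M² − 2a⁴M − a⁴ = 0, with a² = 1−b², is equivalent (for M ≠ −1 and z in the domain of definition) to the fixed-point relation cM = M_B(z/(c(1+M))), where M_B(w) = −1/(√(1−w)·√(1 − (1+b²)²w/(1−b²))) is the moment generating function of the AR(1) autocovariance spectral law. -/
import Mathlib


/-- The quartic equation
`a⁴c²M⁴ + 2a²c(-(1+b²)z + a²c)M³ + ((1-b²)²z² - 2a²c(1+b²)z + (c²-1)a⁴)M² - 2a⁴M - a⁴ = 0`,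
with `a² = 1 - b²`, is equivalent (for `M ≠ -1`, `c ≠ 0`, `b² ≠ 1`) to the fixed-point
relation `cM = M_B(z/(c(1+M)))` after clearing square roots, where
`M_B(w) = -1/(√(1 - w(1-b)/(1+b))·√(1 - w(1+b)/(1-b)))` is the moment generating function
of the AR(1) autocovariance spectral law; i.e. to
`(cM)² (1 - w(1-b)/(1+b)) (1 - w(1+b)/(1-b)) = 1` with `w = z/(c(1+M))`. -/
theorem stmt19 (b c z M : ℂ) (hb : b ^ 2 ≠ 1) (hc : c ≠ 0) (hM : M ≠ -1)
    (a : ℂ) (ha : a ^ 2 = 1 - b ^ 2)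
    (w : ℂ) (hw : w = z / (c * (1 + M))) :
    a ^ 4 * c ^ 2 * M ^ 4 + 2 * a ^ 2 * c * (-(1 + b ^ 2) * z + a ^ 2 * c) * M ^ 3 +
        ((1 - b ^ 2) ^ 2 * z ^ 2 - 2 * a ^ 2 * c * (1 + b ^ 2) * z + (c ^ 2 - 1) * a ^ 4) *
          M ^ 2 - 2 * a ^ 4 * M - a ^ 4 = 0 ↔
      (c * M) ^ 2 * ((1 - w * (1 - b) / (1 + b)) * (1 - w * (1 + b) / (1 - b))) = 1 := by
  have hM1 : (1 : ℂ) + M ≠ 0 := by intro h; apply hM; linear_combination h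
  have hbp : (1 : ℂ) + b ≠ 0 := by intro h; apply hb; linear_combination (b - 1) * h
  have hbm : (1 : ℂ) - b ≠ 0 := by intro h; apply hb; linear_combination (-(b + 1)) * h
  have hb2 : (1 : ℂ) - b ^ 2 ≠ 0 := sub_ne_zero.mpr fun h => hb h.symm
  have ha4 : a ^ 4 = (1 - b ^ 2) ^ 2 := by rw [show a ^ 4 = (a ^ 2) ^ 2 by ring, ha]
  subst hw
  rw [ha4, ha]
  have key : (1 - b ^ 2) ^ 2 * c ^ 2 * M ^ 4 +
        2 * (1 - b ^ 2) * c * (-(1 + b ^ 2) * z + (1 - b ^ 2) * c) * M ^ 3 +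
        ((1 - b ^ 2) ^ 2 * z ^ 2 - 2 * (1 - b ^ 2) * c * (1 + b ^ 2) * z +
          (c ^ 2 - 1) * (1 - b ^ 2) ^ 2) * M ^ 2 - 2 * (1 - b ^ 2) ^ 2 * M - (1 - b ^ 2) ^ 2
      = (1 - b ^ 2) ^ 2 * (1 + M) ^ 2 *
        ((c * M) ^ 2 * ((1 - z / (c * (1 + M)) * (1 - b) / (1 + b)) *
          (1 - z / (c * (1 + M)) * (1 + b) / (1 - b))) - 1) := by
    field_simp
    ring
  rw [key, mul_eq_zero, sub_eq_zero]
  have hnz : (1 - b ^ 2) ^ 2 * (1 + M) ^ 2 ≠ 0 :=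
    mul_ne_zero (pow_ne_zero _ hb2) (pow_ne_zero _ hM1)
  exact ⟨fun h => h.resolve_left hnz, Or.inr⟩
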